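/- Let $A$ be a normal abelian subgroup of a group $G$ and $g \in G$ such that $g$ is a randomly power $k$-Engel element of $K = A\langle g \rangle$. Then $g$ is a left $k$-Engel element of $K$, i.e., $[x,{}_k\, g] = 1$ for all $x \in K$. -/

import Mathlib

open scoped commutatorElement

/-- Iterated commutator `[x, y, y, ..., y]` with `y` repeated `k` times (`engel x y 0 = x`). -/
def engel {G : Type*} [Group G] (x y : G) : ℕ → G
  | 0 => x
  | k + 1 => ⁅engel x y k, y⁆

/-- Left-normed iterated commutator `[x, l₁, l₂, ..., lₙ]`. -/
def lcomm {G : Type*} [Group G] (x : G) (l : List G) : G :=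
  l.foldl (fun u v => ⁅u, v⁆) x

/-- `x` is a left Engel element of `G`. -/
def IsLeftEngel (G : Type*) [Group G] (x : G) : Prop :=
  ∀ a : G, ∃ k : ℕ, 0 < k ∧ engel a x k = 1

/-!
As `A` is normal and abelian and `K / A` is cyclic, all commutators of `K = A ⟨g⟩` lie in `A`,
and on `A` the maps `b ↦ [b, h]` for `h ∈ ⟨g⟩` are commuting endomorphisms. Since
`[e, h] = 1 ↔ [e, g] = 1` when `⟨h⟩ = ⟨g⟩`, a trivial commutator `[b, h₁, …, hₙ]` with `b ∈ A`
and generators `hᵢ` of `⟨g⟩` forces `[b, g, …, g] = 1`. After absorbing the conjugations by `x`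
into `A`, both alternatives of the hypothesis become `[[x⁻¹, h], h₂, …, h_k] = 1`, hence
`[[x⁻¹, h], g, …, g] = 1`. The `b ∈ A` with `[b, g, …, g] = 1` form a subgroup normalised by
`K`, so it contains `[x⁻¹, hᵐ]` for every `m`, in particular `[x⁻¹, g]`, and with it
`[x, g] = x [x⁻¹, g]⁻¹ x⁻¹`.
-/

open Subgroup

section

variable {G : Type*} [Group G]

theorem lcomm_cons (x h : G) (t : List G) : lcomm x (h :: t) = lcomm ⁅x, h⁆ t := rfl

theorem lcomm_one (l : List G) : lcomm 1 l = 1 := by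
  induction l with
  | nil => rfl
  | cons h t ih => rwa [lcomm_cons, commutatorElement_one_left]

theorem engel_succ' (x g : G) (s : ℕ) : engel x g (s + 1) = engel ⁅x, g⁆ g s := by
  induction s with
  | zero => rfl
  | succ s ih => exact congrArg (⁅·, g⁆) ih

theorem engel_eq_lcomm_replicate (x g : G) (s : ℕ) :
    engel x g s = lcomm x (List.replicate s g) := by
  induction s generalizing x with
  | zero => rfl
  | succ s ih => rw [engel_succ', ih]; rfl

theorem commutatorElement_mul_left_of_commute {c u h : G} (hu : Commute u h) :
    ⁅c * u, h⁆ = ⁅c, h⁆ := by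
  rw [commutatorElement_mul_left_eq_conj_mul, commutatorElement_eq_one_iff_commute.mpr hu,
    mul_one, mul_inv_cancel, one_mul]

theorem commute_of_mem_zpowers {a b g : G} (ha : a ∈ zpowers g) (hb : b ∈ zpowers g) :
    Commute a b := by
  obtain ⟨m, rfl⟩ := ha
  obtain ⟨n, rfl⟩ := hb
  exact Commute.zpow_zpow_self g m n

theorem Commute.of_mem_zpowers {a h u : G} (ha : Commute a h) (hu : u ∈ zpowers h) :
    Commute a u := by
  obtain ⟨m, rfl⟩ := hu
  exact ha.zpow_right m

theorem commutatorElement_mem_of_mem_zpowers {N : Subgroup G} {y h u : G}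
    (hh : h ∈ normalizer (N : Set G)) (hy : ⁅y, h⁆ ∈ N) (hu : u ∈ zpowers h) : ⁅y, u⁆ ∈ N := by
  let S : Subgroup G :=
    { carrier := {a | a ∈ normalizer (N : Set G) ∧ ⁅y, a⁆ ∈ N}
      one_mem' := ⟨one_mem _, by simp [one_mem]⟩
      mul_mem' := fun {a b} ⟨ha, hya⟩ ⟨hb, hyb⟩ => by
        refine ⟨mul_mem ha hb, ?_⟩
        rw [show ⁅y, a * b⁆ = ⁅y, a⁆ * (a * ⁅y, b⁆ * a⁻¹) by group]
        exact mul_mem hya ((mem_normalizer_iff.mp ha _).mp hyb)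
      inv_mem' := fun {a} ⟨ha, hya⟩ => by
        refine ⟨inv_mem ha, ?_⟩
        rw [show ⁅y, a⁻¹⁆ = a⁻¹ * ⁅y, a⁆⁻¹ * a by group]
        exact (mem_normalizer_iff''.mp ha _).mp (inv_mem hya) }
  exact (zpowers_le.mpr (show h ∈ S from ⟨hh, hy⟩) hu).2

section Normal

variable {A : Subgroup G} [A.Normal]

theorem commutatorElement_mem_left {b : G} (hb : b ∈ A) (h : G) : ⁅b, h⁆ ∈ A :=
  commutator_le_left A ⊤ (commutator_mem_commutator hb (mem_top h))

theorem lcomm_mem {b : G} (hb : b ∈ A) (l : List G) : lcomm b l ∈ A := by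
  induction l generalizing b with
  | nil => exact hb
  | cons h t ih => exact ih (commutatorElement_mem_left hb h)

theorem engel_mem {b : G} (hb : b ∈ A) (g : G) (s : ℕ) : engel b g s ∈ A :=
  engel_eq_lcomm_replicate b g s ▸ lcomm_mem hb _

theorem commutatorElement_mem_of_mem_sup_zpowers {g u v : G} (hu : u ∈ A ⊔ zpowers g)
    (hv : v ∈ A ⊔ zpowers g) : ⁅u, v⁆ ∈ A := by
  let π := QuotientGroup.mk' A
  have hK : (A ⊔ zpowers g).map π = zpowers (π g) := by
    rw [Subgroup.map_sup, QuotientGroup.map_mk'_self, MonoidHom.map_zpowers, bot_sup_eq]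
  obtain ⟨m, hm⟩ : π u ∈ zpowers (π g) := hK ▸ mem_map_of_mem π hu
  obtain ⟨n, hn⟩ : π v ∈ zpowers (π g) := hK ▸ mem_map_of_mem π hv
  rw [← QuotientGroup.eq_one_iff, ← QuotientGroup.mk'_apply, map_commutatorElement, ← hm, ← hn,
    commutatorElement_eq_one_iff_commute]
  exact Commute.zpow_zpow_self _ m n

section Abelian

variable [IsMulCommutative A]

theorem commutatorElement_mul_left_of_mem {b₁ b₂ : G} (h₁ : b₁ ∈ A) (h₂ : b₂ ∈ A) (u : G) :
    ⁅b₁ * b₂, u⁆ = ⁅b₁, u⁆ * ⁅b₂, u⁆ := by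
  rw [commutatorElement_mul_left_eq_conj_mul, setLike_mul_comm h₁ (commutatorElement_mem_left h₂ u),
    mul_inv_cancel_right, setLike_mul_comm (commutatorElement_mem_left h₂ u)
      (commutatorElement_mem_left h₁ u)]

theorem commutatorElement_mul_right_of_mem {b c : G} (hb : b ∈ A) (hc : c ∈ A) (u : G) :
    ⁅b, c * u⁆ = ⁅b, u⁆ := by
  rw [commutatorElement_mul_right_eq_mul_conj,
    commutatorElement_eq_one_iff_mul_comm.mpr (setLike_mul_comm hb hc), one_mul,
    setLike_mul_comm hc (commutatorElement_mem_left hb u), mul_inv_cancel_right]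

theorem lcomm_mul {b₁ b₂ : G} (h₁ : b₁ ∈ A) (h₂ : b₂ ∈ A) (l : List G) :
    lcomm (b₁ * b₂) l = lcomm b₁ l * lcomm b₂ l := by
  induction l generalizing b₁ b₂ with
  | nil => rfl
  | cons h t ih =>
    rw [lcomm_cons, lcomm_cons, lcomm_cons, commutatorElement_mul_left_of_mem h₁ h₂,
      ih (commutatorElement_mem_left h₁ h) (commutatorElement_mem_left h₂ h)]

theorem lcomm_inv {b : G} (hb : b ∈ A) (l : List G) : lcomm b⁻¹ l = (lcomm b l)⁻¹ :=
  eq_inv_of_mul_eq_one_left <| by rw [← lcomm_mul (inv_mem hb) hb, inv_mul_cancel, lcomm_one]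

theorem engel_mul {b₁ b₂ : G} (h₁ : b₁ ∈ A) (h₂ : b₂ ∈ A) (g : G) (s : ℕ) :
    engel (b₁ * b₂) g s = engel b₁ g s * engel b₂ g s := by
  simp only [engel_eq_lcomm_replicate, lcomm_mul h₁ h₂]

theorem engel_inv {b : G} (hb : b ∈ A) (g : G) (s : ℕ) : engel b⁻¹ g s = (engel b g s)⁻¹ := by
  simp only [engel_eq_lcomm_replicate, lcomm_inv hb]

/-- In additive notation `[b, h] = b^h - b`, so both sides are `b^(h₁h₂) - b^h₁ - b^h₂ + b`. -/
theorem commutatorElement_commutatorElement_comm {b h₁ h₂ : G} (hb : b ∈ A)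
    (hc : Commute h₁ h₂) : ⁅⁅b, h₁⁆, h₂⁆ = ⁅⁅b, h₂⁆, h₁⁆ := by
  have conj_mem (w : G) {a : G} (ha : a ∈ A) : w * a * w⁻¹ ∈ A := ‹A.Normal›.conj_mem a ha w
  have swap {u v r : G} (hu : u ∈ A) (hv : v ∈ A) (hr : r ∈ A) : u * (r * v) = v * (r * u) := by
    rw [setLike_mul_comm hr hv, ← mul_assoc, setLike_mul_comm hu hv, mul_assoc,
      setLike_mul_comm hu hr]
  calc ⁅⁅b, h₁⁆, h₂⁆
      = b * (h₁ * b⁻¹ * h₁⁻¹ * (h₂ * h₁ * b * (h₂ * h₁)⁻¹ * (h₂ * b⁻¹ * h₂⁻¹))) := by group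
    _ = b * (h₂ * b⁻¹ * h₂⁻¹ * (h₁ * h₂ * b * (h₁ * h₂)⁻¹ * (h₁ * b⁻¹ * h₁⁻¹))) := by
      rw [hc.eq, swap (conj_mem _ (inv_mem hb)) (conj_mem _ (inv_mem hb)) (conj_mem _ hb)]
    _ = ⁅⁅b, h₂⁆, h₁⁆ := by group

theorem engel_commutatorElement_of_commute {b h g : G} (hb : b ∈ A) (hc : Commute h g)
    (s : ℕ) : engel ⁅b, h⁆ g s = ⁅engel b g s, h⁆ := by
  induction s with
  | zero => rfl
  | succ s ih =>
    change ⁅engel ⁅b, h⁆ g s, g⁆ = ⁅⁅engel b g s, g⁆, h⁆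
    rw [ih, commutatorElement_commutatorElement_comm (engel_mem hb g s) hc.symm]

theorem engel_length_eq_one_of_lcomm_eq_one {b g : G} {l : List G} (hb : b ∈ A)
    (hl : ∀ h ∈ l, zpowers h = zpowers g) (h1 : lcomm b l = 1) : engel b g l.length = 1 := by
  induction l generalizing b with
  | nil => exact h1
  | cons h t ih =>
    have hhg := hl h List.mem_cons_self
    have ht := ih (commutatorElement_mem_left hb h) (fun h' hh' => hl h' (.tail h hh')) h1
    rw [engel_commutatorElement_of_commute hb (commute_of_mem_zpowers (hhg ▸ mem_zpowers h)
      (mem_zpowers g)), commutatorElement_eq_one_iff_commute] at ht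
    exact commutatorElement_eq_one_iff_commute.mpr (ht.of_mem_zpowers (hhg ▸ mem_zpowers g))

theorem engel_conj_of_mem_sup_zpowers {w b g : G} (hw : w ∈ A ⊔ zpowers g) (hb : b ∈ A)
    (s : ℕ) : engel (w * b * w⁻¹) g s = w * engel b g s * w⁻¹ := by
  induction s with
  | zero => rfl
  | succ s ih =>
    change ⁅engel (w * b * w⁻¹) g s, g⁆ = w * ⁅engel b g s, g⁆ * w⁻¹
    have hg : w * g * w⁻¹ = ⁅w, g⁆ * g := by group
    rw [ih, conjugate_commutatorElement, hg, commutatorElement_mul_right_of_mem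
      (‹A.Normal›.conj_mem _ (engel_mem hb g s) w)
      (commutatorElement_mem_of_mem_sup_zpowers hw (mem_sup_right (mem_zpowers g)))]

variable (A) in
def engelKernel (g : G) (s : ℕ) : Subgroup G where
  carrier := {b | b ∈ A ∧ engel b g s = 1}
  mul_mem' := fun ⟨ha, ha'⟩ ⟨hb, hb'⟩ => ⟨mul_mem ha hb, by rw [engel_mul ha hb, ha', hb', one_mul]⟩
  one_mem' := ⟨one_mem A, by rw [engel_eq_lcomm_replicate, lcomm_one]⟩
  inv_mem' := fun ⟨ha, ha'⟩ => ⟨inv_mem ha, by rw [engel_inv ha, ha', inv_one]⟩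

theorem sup_zpowers_le_normalizer_engelKernel (g : G) (s : ℕ) :
    A ⊔ zpowers g ≤ normalizer (engelKernel A g s : Set G) := by
  have conj_mem {w b : G} (hw : w ∈ A ⊔ zpowers g) (hb : b ∈ engelKernel A g s) :
      w * b * w⁻¹ ∈ engelKernel A g s :=
    ⟨‹A.Normal›.conj_mem b hb.1 w, by rw [engel_conj_of_mem_sup_zpowers hw hb.1, hb.2]; group⟩
  refine fun w hw => mem_normalizer_iff.mpr fun b => ⟨conj_mem hw, fun hb => ?_⟩
  simpa [mul_assoc] using conj_mem (inv_mem hw) hb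

theorem engel_succ_eq_one_of_engel_commutatorElement_inv {x h g : G} {s : ℕ}
    (hx : x ∈ A ⊔ zpowers g) (hh : zpowers h = zpowers g) (h1 : engel ⁅x⁻¹, h⁆ g s = 1) :
    engel x g (s + 1) = 1 := by
  have hK := sup_zpowers_le_normalizer_engelKernel (A := A) g s
  have hhK : h ∈ A ⊔ zpowers g := mem_sup_right (hh ▸ mem_zpowers h)
  have hxh : ⁅x⁻¹, h⁆ ∈ engelKernel A g s :=
    ⟨commutatorElement_mem_of_mem_sup_zpowers (inv_mem hx) hhK, h1⟩
  have hxg : ⁅x⁻¹, g⁆ ∈ engelKernel A g s :=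
    commutatorElement_mem_of_mem_zpowers (hK hhK) hxh (hh ▸ mem_zpowers g)
  rw [engel_succ', show ⁅x, g⁆ = x * ⁅x⁻¹, g⁆⁻¹ * x⁻¹ by group]
  exact ((mem_normalizer_iff.mp (hK hx) _).mp (inv_mem hxg)).2

theorem engel_succ_eq_one_of_lcomm_commutatorElement_inv {x h g : G} {l : List G}
    (hx : x ∈ A ⊔ zpowers g) (hh : zpowers h = zpowers g) (hl : ∀ h' ∈ l, zpowers h' = zpowers g)
    (h1 : lcomm ⁅x⁻¹, h⁆ l = 1) : engel x g (l.length + 1) = 1 :=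
  engel_succ_eq_one_of_engel_commutatorElement_inv hx hh <| engel_length_eq_one_of_lcomm_eq_one
    (commutatorElement_mem_of_mem_sup_zpowers (inv_mem hx) (mem_sup_right (hh ▸ mem_zpowers h)))
    hl h1

theorem lcomm_map_conj_of_mem_sup_zpowers {x b g : G} {t : List G} (hx : x ∈ A ⊔ zpowers g)
    (hb : b ∈ A) (ht : ∀ u ∈ t, u ∈ A ⊔ zpowers g) :
    lcomm b (t.map fun u => x⁻¹ * u * x) = lcomm b t := by
  induction t generalizing b with
  | nil => rfl
  | cons u t ih =>
    rw [List.map_cons, lcomm_cons, lcomm_cons, show x⁻¹ * u * x = ⁅x⁻¹, u⁆ * u by group,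
      commutatorElement_mul_right_of_mem hb
        (commutatorElement_mem_of_mem_sup_zpowers (inv_mem hx) (ht u List.mem_cons_self))]
    exact ih (commutatorElement_mem_left hb u) fun v hv => ht v (.tail u hv)

theorem engel_succ_eq_one_of_lcomm_conj {x g₁ g : G} {gs : List G} (hx : x ∈ A ⊔ zpowers g)
    (hgs : ∀ h ∈ g₁ :: gs, zpowers h = zpowers g) (h1 : lcomm (x⁻¹ * g₁ * x) gs = 1) :
    engel x g (gs.length + 1) = 1 := by
  refine engel_succ_eq_one_of_lcomm_commutatorElement_inv hx (hgs g₁ List.mem_cons_self)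
    (fun h hh => hgs h (.tail g₁ hh)) ?_
  cases gs with
  | nil =>
    obtain rfl : g₁ = 1 := conj_eq_one_iff.mp (by rwa [inv_inv] : x⁻¹ * g₁ * x⁻¹⁻¹ = 1)
    exact commutatorElement_one_right x⁻¹
  | cons h t =>
    have hg₁h : Commute g₁ h := commute_of_mem_zpowers (hgs g₁ (by simp) ▸ mem_zpowers g₁)
      (hgs h (by simp) ▸ mem_zpowers h)
    rwa [lcomm_cons, show x⁻¹ * g₁ * x = ⁅x⁻¹, g₁⁆ * g₁ by group,
      commutatorElement_mul_left_of_commute hg₁h] at h1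

theorem engel_succ_eq_one_of_lcomm_map_conj {x g₁ g : G} {gs : List G} (hx : x ∈ A ⊔ zpowers g)
    (hgs : ∀ h ∈ g₁ :: gs, zpowers h = zpowers g)
    (h1 : lcomm g₁ (gs.map fun gi => x⁻¹ * gi * x) = 1) : engel x g (gs.length + 1) = 1 := by
  have hzp (u : G) (hu : u ∈ g₁ :: gs) : u ∈ zpowers g := hgs u hu ▸ mem_zpowers u
  cases gs with
  | nil =>
    obtain rfl : g₁ = 1 := h1
    exact engel_succ_eq_one_of_lcomm_commutatorElement_inv (l := []) hx (hgs 1 (by simp))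
      (by simp) (commutatorElement_one_right x⁻¹)
  | cons h t =>
    have hc : ⁅x⁻¹, h⁆ ∈ A :=
      commutatorElement_mem_of_mem_sup_zpowers (inv_mem hx) (mem_sup_right (hzp h (by simp)))
    have hcg₁ : ⁅⁅x⁻¹, h⁆, g₁⁆ ∈ A := commutatorElement_mem_left hc g₁
    rw [List.map_cons, lcomm_cons, show x⁻¹ * h * x = ⁅x⁻¹, h⁆ * h by group,
      ← commutatorElement_inv (⁅x⁻¹, h⁆ * h),
      commutatorElement_mul_left_of_commute (commute_of_mem_zpowers (hzp h (by simp))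
        (hzp g₁ (by simp))),
      lcomm_map_conj_of_mem_sup_zpowers hx (inv_mem hcg₁)
        (fun u hu => mem_sup_right (hzp u (by simp [hu]))),
      lcomm_inv hcg₁, inv_eq_one] at h1
    exact engel_succ_eq_one_of_lcomm_commutatorElement_inv (l := g₁ :: t) hx (hgs h (by simp))
      (fun u hu => hgs u (by simp only [List.mem_cons] at hu ⊢; tauto)) h1

end Abelian

end Normal

end

theorem stmt_4_general {G : Type*} [Group G] (A : Subgroup G) (hA : A.Normal)
    (hab : ∀ u ∈ A, ∀ v ∈ A, u * v = v * u)
    (g : G) (k : ℕ)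
    (hrand : ∀ x ∈ A ⊔ Subgroup.zpowers g, ∃ (g₁ : G) (gs : List G),
      (g₁ :: gs).length = k ∧
      (∀ gi ∈ g₁ :: gs, Subgroup.zpowers gi = Subgroup.zpowers g) ∧
      (lcomm (x⁻¹ * g₁ * x) gs = 1 ∨
        lcomm g₁ (gs.map (fun gi => x⁻¹ * gi * x)) = 1)) :
    ∀ x ∈ A ⊔ Subgroup.zpowers g, engel x g k = 1 := by
  have : IsMulCommutative A := .of_setLike_mul_comm hab
  intro x hx
  obtain ⟨g₁, gs, rfl, hgs, h1 | h1⟩ := hrand x hx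
  · exact engel_succ_eq_one_of_lcomm_conj hx hgs h1
  · exact engel_succ_eq_one_of_lcomm_map_conj hx hgs h1

theorem stmt_4 {G : Type*} [Group G] (A : Subgroup G) (hA : A.Normal)
    (hab : ∀ u ∈ A, ∀ v ∈ A, u * v = v * u)
    (g : G) (k : ℕ) (hk : 0 < k)
    (hrand : ∀ x ∈ A ⊔ Subgroup.zpowers g, ∃ (g₁ : G) (gs : List G),
      (g₁ :: gs).length = k ∧
      (∀ gi ∈ g₁ :: gs, Subgroup.zpowers gi = Subgroup.zpowers g) ∧
      (lcomm (x⁻¹ * g₁ * x) gs = 1 ∨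
        lcomm g₁ (gs.map (fun gi => x⁻¹ * gi * x)) = 1)) :
    ∀ x ∈ A ⊔ Subgroup.zpowers g, engel x g k = 1 :=
  stmt_4_general A hA hab g k hrand
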